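/- In the special case a = 0 and c = 1, the minimizer of Q(b) = ∫_0^b (b-r)r dF(r) + ∫_b^1 (1-r)(r-b) dF(r) is b* = F^{-1}(1 - E[R]). -/

import Mathlib

/-!
Writing the second integral as `∫₁ᵇ (b - r)(1 - r) dF(r)`, both terms of `Q` have the form
`∫ₐᵇ (b - r) g(r) dr`, whose derivative in `b` is `∫ₐᵇ g`. Hence
`Q'(b) = ∫₀ᵇ r dF + ∫₁ᵇ (1 - r) dF = F b - 1 + E[R] = F b - F b*`, which changes sign from `-` to `+`
at `b*` because `F` is increasing.
-/

open intervalIntegral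

theorem hasDerivAt_integral_sub_mul {g : ℝ → ℝ} (hg : Continuous g) (a b : ℝ) :
    HasDerivAt (fun x => ∫ r in a..x, (x - r) * g r) (∫ r in a..b, g r) b := by
  have hrg : Continuous fun r => r * g r := continuous_id.mul hg
  have hsplit : (fun x => ∫ r in a..x, (x - r) * g r) =
      fun x => x * (∫ r in a..x, g r) - ∫ r in a..x, r * g r := by
    funext x
    rw [← integral_const_mul, ← integral_sub (f := fun r => x * g r)
      ((continuous_const.mul hg).intervalIntegrable _ _) (hrg.intervalIntegrable _ _)]
    congr 1
    ext r
    ring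
  rw [hsplit]
  refine (((hasDerivAt_id b).mul (hg.integral_hasStrictDerivAt a b).hasDerivAt).sub
    (hrg.integral_hasStrictDerivAt a b).hasDerivAt).congr_deriv ?_
  simp only [id_eq]
  ring

theorem hasDerivAt_integral_sub_mul_add_integral_mul_sub {F p : ℝ → ℝ}
    (hF : ∀ x, HasDerivAt F (p x) x) (hp : Continuous p) (b : ℝ) :
    HasDerivAt (fun b => (∫ r in (0:ℝ)..b, (b - r) * r * p r) +
        ∫ r in b..(1:ℝ), (1 - r) * (r - b) * p r)
      (F b - F 1 + ∫ r in (0:ℝ)..1, r * p r) b := by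
  have hrp : Continuous fun r => r * p r := continuous_id.mul hp
  have hrp' : Continuous fun r => (1 - r) * p r := (continuous_const.sub continuous_id).mul hp
  have hfun : (fun b => (∫ r in (0:ℝ)..b, (b - r) * r * p r) +
        ∫ r in b..(1:ℝ), (1 - r) * (r - b) * p r) =
      fun b => (∫ r in (0:ℝ)..b, (b - r) * (r * p r)) +
        ∫ r in (1:ℝ)..b, (b - r) * ((1 - r) * p r) := by
    funext x
    rw [integral_symm x 1, ← integral_neg]
    congr 1 <;> congr 1 <;> ext r <;> ring
  have hdiff : (∫ r in (1:ℝ)..b, (1 - r) * p r) = (F b - F 1) - ∫ r in (1:ℝ)..b, r * p r := by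
    rw [← integral_eq_sub_of_hasDerivAt (fun r _ => hF r) (hp.intervalIntegrable 1 b),
      ← integral_sub (hp.intervalIntegrable 1 b) (hrp.intervalIntegrable 1 b)]
    congr 1
    ext r
    ring
  have hadj := integral_add_adjacent_intervals
    (hrp.intervalIntegrable (μ := MeasureTheory.volume) 0 1) (hrp.intervalIntegrable 1 b)
  rw [hfun]
  refine ((hasDerivAt_integral_sub_mul hrp 0 b).add
    (hasDerivAt_integral_sub_mul hrp' 1 b)).congr_deriv ?_
  rw [hdiff]
  linarith

theorem stmt2_general (F p : ℝ → ℝ)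
    (hF : ∀ x, HasDerivAt F (p x) x) (hpcont : Continuous p)
    (hmono : StrictMonoOn F (Set.Icc (0:ℝ) 1))
    (hF1 : F 1 = 1)
    (Q : ℝ → ℝ)
    (hQ : ∀ b, Q b = (∫ r in (0:ℝ)..b, (b - r) * r * p r) +
      ∫ r in b..(1:ℝ), (1 - r) * (r - b) * p r)
    (ER : ℝ) (hER : ER = ∫ r in (0:ℝ)..(1:ℝ), r * p r)
    (bstar : ℝ) (hbmem : bstar ∈ Set.Icc (0:ℝ) 1)
    (hbs : F bstar = 1 - ER) :
    IsMinOn Q (Set.Icc (0:ℝ) 1) bstar := by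
  have hQ' : ∀ b, HasDerivAt Q (F b - F bstar) b := by
    intro b
    rw [funext hQ]
    refine (hasDerivAt_integral_sub_mul_add_integral_mul_sub hF hpcont b).congr_deriv ?_
    rw [hbs, hF1, hER]
    ring
  have hQd : Differentiable ℝ Q := fun x => (hQ' x).differentiableAt
  refine isMinOn_Icc_of_deriv (hQd 0).continuousAt (hQd bstar).continuousAt (hQd 1).continuousAt
    hQd.differentiableOn hQd.differentiableOn ?_ ?_
  · intro x hx
    rw [(hQ' x).deriv, sub_nonpos]
    exact hmono.monotoneOn ⟨hx.1.le, hx.2.le.trans hbmem.2⟩ hbmem hx.2.le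
  · intro x hx
    rw [(hQ' x).deriv, sub_nonneg]
    exact hmono.monotoneOn hbmem ⟨hbmem.1.trans hx.1.le, hx.2.le⟩ hx.1.le

/-- In the special case a = 0 and c = 1, the minimizer of
Q(b) = ∫_0^b (b-r)r dF(r) + ∫_b^1 (1-r)(r-b) dF(r) is b* = F⁻¹(1 - E[R]),
i.e. the point b* ∈ [0,1] satisfying F(b*) = 1 - E[R]. -/
theorem stmt2 (F p : ℝ → ℝ)
    (hF : ∀ x, HasDerivAt F (p x) x) (hpcont : Continuous p)
    (hppos : ∀ x ∈ Set.Icc (0:ℝ) 1, 0 < p x)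
    (hmono : StrictMonoOn F (Set.Icc (0:ℝ) 1))
    (hF0 : F 0 = 0) (hF1 : F 1 = 1)
    (Q : ℝ → ℝ)
    (hQ : ∀ b, Q b = (∫ r in (0:ℝ)..b, (b - r) * r * p r) +
      ∫ r in b..(1:ℝ), (1 - r) * (r - b) * p r)
    (ER : ℝ) (hER : ER = ∫ r in (0:ℝ)..(1:ℝ), r * p r)
    (bstar : ℝ) (hbmem : bstar ∈ Set.Icc (0:ℝ) 1)
    (hbs : F bstar = 1 - ER) :
    IsMinOn Q (Set.Icc (0:ℝ) 1) bstar :=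
  stmt2_general F p hF hpcont hmono hF1 Q hQ ER hER bstar hbmem hbs
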